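/- Consider the explicit CHSH strategy on H_A=H_B=ℂ² with shared state |ψ⟩ = (|0⟩⊗|0⟩ + |1⟩⊗|1⟩)/√2, and with projections [θ] = |θ⟩⟨θ| where |θ⟩ = cos θ|0⟩ + sin θ|1⟩, given by A⁰₀=[0], A⁰₁=[π/2], A¹₀=[π/4], A¹₁=[3π/4], B⁰₀=[π/8], B⁰₁=[5π/8], B¹₀=[−π/8], B¹₁=[3π/8]. Then (1/4)·∑_{a,b∈{0,1}} ∑_{x,y: x⊕y=a·b} ⟨ψ|A^a_x⊗B^b_y|ψ⟩ = cos²(π/8); that is, this quantum strategy wins the CHSH game with probability exactly cos²(π/8). -/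

import Mathlib

/-!
Alice measures in the basis at angle `αₐ ∈ {0, π/4}` and Bob in the basis at angle
`β_b ∈ {π/8, -π/8}`, answer `1` being the orthogonal direction (angle `+ π/2`). On the maximally
entangled state `⟨ψ|P ⊗ Q|ψ⟩ = tr(P Qᵀ)/2`, which for real projections gives
`⟨ψ|[α] ⊗ [β]|ψ⟩ = cos²(α - β)/2`. So the players agree with probability `cos²(αₐ - β_b)` and
disagree with probability `sin²(αₐ - β_b)`. The angle differences are `±π/8` on the three question
pairs that require agreement and `3π/8` on the one that requires disagreement, so each question
pair is won with probability `cos²(π/8)`.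
-/

noncomputable section

/-- The unit vector `|θ⟩ = cos θ |0⟩ + sin θ |1⟩` in `ℂ²`. -/
def ket (θ : ℝ) : Fin 2 → ℂ := fun i => if i = 0 then (Real.cos θ : ℂ) else (Real.sin θ : ℂ)

/-- The rank-one orthogonal projection `[θ] = |θ⟩⟨θ|` onto the span of `|θ⟩`. -/
def proj (θ : ℝ) : Matrix (Fin 2) (Fin 2) ℂ := fun i j => ket θ i * star (ket θ j)

/-- The maximally entangled state `|ψ⟩ = (|0⟩⊗|0⟩ + |1⟩⊗|1⟩)/√2` on `ℂ²⊗ℂ²`. -/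
def chshPsi : Fin 2 × Fin 2 → ℂ :=
  fun p => if p.1 = p.2 then ((1 / Real.sqrt 2 : ℝ) : ℂ) else 0

/-- Alice's CHSH measurement projections: `A⁰₀=[0]`, `A⁰₁=[π/2]`, `A¹₀=[π/4]`,
`A¹₁=[3π/4]` (indexed by question `a` and answer `x`). -/
def Aop : Bool → Bool → Matrix (Fin 2) (Fin 2) ℂ
  | false, false => proj 0
  | false, true => proj (Real.pi / 2)
  | true, false => proj (Real.pi / 4)
  | true, true => proj (3 * Real.pi / 4)

/-- Bob's CHSH measurement projections: `B⁰₀=[π/8]`, `B⁰₁=[5π/8]`,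
`B¹₀=[−π/8]`, `B¹₁=[3π/8]` (indexed by question `b` and answer `y`). -/
def Bop : Bool → Bool → Matrix (Fin 2) (Fin 2) ℂ
  | false, false => proj (Real.pi / 8)
  | false, true => proj (5 * Real.pi / 8)
  | true, false => proj (-Real.pi / 8)
  | true, true => proj (3 * Real.pi / 8)

open Real Matrix

lemma star_chshPsi_dotProduct_kronecker_mulVec (P Q : Matrix (Fin 2) (Fin 2) ℂ) :
    star chshPsi ⬝ᵥ (kroneckerMap (· * ·) P Q *ᵥ chshPsi) = (P * Qᵀ).trace / 2 := by
  have h : (√2 : ℂ)⁻¹ * (√2 : ℂ)⁻¹ = 1 / 2 := by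
    rw [← mul_inv, ← Complex.ofReal_mul, mul_self_sqrt zero_le_two]
    push_cast
    ring
  simp only [dotProduct, mulVec, chshPsi, trace, diag_apply, mul_apply, transpose_apply,
    kroneckerMap_apply, Pi.star_apply, RCLike.star_def, one_div, Complex.ofReal_inv, map_inv₀,
    Complex.conj_ofReal, map_zero, mul_ite, mul_zero, zero_mul, Fintype.sum_prod_type,
    Finset.sum_ite_eq, Finset.mem_univ, ↓reduceIte, Fin.sum_univ_two, zero_ne_one, one_ne_zero,
    add_zero, zero_add]
  linear_combination (P 0 0 * Q 0 0 + P 0 1 * Q 0 1 + P 1 0 * Q 1 0 + P 1 1 * Q 1 1) * h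

lemma trace_proj_mul_transpose_proj (α β : ℝ) :
    (proj α * (proj β)ᵀ).trace = (cos (α - β) ^ 2 : ℝ) := by
  simp only [trace, diag_apply, mul_apply, transpose_apply, proj, ket, RCLike.star_def,
    Complex.conj_ofReal, Fin.sum_univ_two, Fin.isValue, one_ne_zero, ↓reduceIte, cos_sub]
  push_cast
  ring

lemma re_star_chshPsi_dotProduct_kronecker_proj (α β : ℝ) :
    (star chshPsi ⬝ᵥ (kroneckerMap (· * ·) (proj α) (proj β) *ᵥ chshPsi)).re
      = cos (α - β) ^ 2 / 2 := by
  rw [star_chshPsi_dotProduct_kronecker_mulVec, trace_proj_mul_transpose_proj]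
  norm_cast

lemma sum_win_rotated_proj (α β : ℝ) (c : Bool) :
    ∑ x : Bool, ∑ y : Bool,
      (if xor x y = c then
        (star chshPsi ⬝ᵥ (kroneckerMap (· * ·) (proj (α + bif x then π / 2 else 0))
          (proj (β + bif y then π / 2 else 0)) *ᵥ chshPsi)).re
      else 0) = if c then sin (α - β) ^ 2 else cos (α - β) ^ 2 := by
  have hboth : α + π / 2 - (β + π / 2) = α - β := by ring
  have hleft : α + π / 2 - β = α - β + π / 2 := by ring
  have hright : α - (β + π / 2) = α - β - π / 2 := by ring
  simp only [Fintype.sum_bool, cond_true, cond_false, add_zero,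
    re_star_chshPsi_dotProduct_kronecker_proj, hboth, hleft, hright, cos_add_pi_div_two,
    cos_sub_pi_div_two, neg_sq]
  cases c <;> simp

def aliceAngle : Bool → ℝ
  | false => 0
  | true => π / 4

def bobAngle : Bool → ℝ
  | false => π / 8
  | true => -π / 8

lemma Aop_eq_proj (a x : Bool) : Aop a x = proj (aliceAngle a + bif x then π / 2 else 0) := by
  cases a <;> cases x <;> simp only [Aop, aliceAngle, cond] <;> ring_nf

lemma Bop_eq_proj (b y : Bool) : Bop b y = proj (bobAngle b + bif y then π / 2 else 0) := by
  cases b <;> cases y <;> simp only [Bop, bobAngle, cond] <;> ring_nf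

lemma sum_win_Aop_Bop (a b : Bool) :
    ∑ x : Bool, ∑ y : Bool,
      (if xor x y = (a && b) then
        (star chshPsi ⬝ᵥ (kroneckerMap (· * ·) (Aop a x) (Bop b y) *ᵥ chshPsi)).re
      else 0) = cos (π / 8) ^ 2 := by
  simp only [Aop_eq_proj, Bop_eq_proj, sum_win_rotated_proj]
  cases a <;> cases b <;>
    simp only [aliceAngle, bobAngle, Bool.and_false, Bool.and_true, Bool.false_eq_true, if_false,
      if_true]
  · rw [zero_sub, cos_neg]
  · rw [show (0 : ℝ) - -π / 8 = π / 8 by ring]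
  · rw [show π / 4 - π / 8 = π / 8 by ring]
  · rw [show π / 4 - -π / 8 = π / 2 - π / 8 by ring, sin_pi_div_two_sub]

/-- the explicit CHSH strategy given by the shared state
`|ψ⟩ = (|00⟩+|11⟩)/√2` and the projections `Aop`, `Bop` wins the CHSH game
with probability exactly `cos²(π/8)`:
`(1/4)·∑_{a,b} ∑_{x⊕y=a·b} ⟨ψ|A^a_x ⊗ B^b_y|ψ⟩ = cos²(π/8)`. -/
theorem chsh_strategy_wins_cos_sq :
    (1 / 4 : ℝ) * ∑ a : Bool, ∑ b : Bool, ∑ x : Bool, ∑ y : Bool,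
      (if xor x y = (a && b) then
          (dotProduct (star chshPsi)
            ((Matrix.kroneckerMap (· * ·) (Aop a x) (Bop b y)).mulVec chshPsi)).re
        else 0) = Real.cos (Real.pi / 8) ^ 2 := by
  simp only [sum_win_Aop_Bop, Finset.sum_const, Finset.card_univ, Fintype.card_bool, nsmul_eq_mul]
  ring

end
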